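/- arXiv:1601.05106 — 3 statements merged into one kernel-verified Lean document; each statement's English description precedes it below -/
import Mathlib

section
/- Right-hand substitution for sorting: if Γ ⊢ t : κ under an algorithmic context Γ, then Γ ⊢ [Γ]t : κ, where [Γ]t applies the context Γ as a substitution (replacing solved existential variables by their solutions and equated universal variables by their equations). -/
/-- Sorts κ ∈ {⋆, ℕ}. -/
inductive Srt : Type
  | star
  | nat
  deriving DecidableEq

/-- Algorithmic types and index terms, with named universal variables `var`
and existential variables `evar`. -/
inductive Ty : Type
  | unit
  | var (x : ℕ)
  | evar (a : ℕ)
  | zero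
  | succ (t : Ty)
  | arrow (A B : Ty)
  | sum (A B : Ty)
  | prod (A B : Ty)
  | all (x : ℕ) (κ : Srt) (A : Ty)
  | ex (x : ℕ) (κ : Srt) (A : Ty)
  | impl (t u : Ty) (A : Ty)
  | wth (A : Ty) (t u : Ty)
  deriving DecidableEq

namespace Ty

/-- Substitution `[τ/α]` for a universal variable. -/
def subst (τ : Ty) (α : ℕ) : Ty → Ty
  | unit => unit
  | var x => if x = α then τ else var x
  | evar a => evar a
  | zero => zero
  | succ t => succ (subst τ α t)
  | arrow A B => arrow (subst τ α A) (subst τ α B)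
  | sum A B => sum (subst τ α A) (subst τ α B)
  | prod A B => prod (subst τ α A) (subst τ α B)
  | all x κ A => all x κ (if x = α then A else subst τ α A)
  | ex x κ A => ex x κ (if x = α then A else subst τ α A)
  | impl t u A => impl (subst τ α t) (subst τ α u) (subst τ α A)
  | wth A t u => wth (subst τ α A) (subst τ α t) (subst τ α u)

/-- Substitution `[τ/α̂]` for an existential variable. -/
def substE (τ : Ty) (a : ℕ) : Ty → Ty
  | unit => unit
  | var x => var x
  | evar b => if b = a then τ else evar b
  | zero => zero
  | succ t => succ (substE τ a t)
  | arrow A B => arrow (substE τ a A) (substE τ a B)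
  | sum A B => sum (substE τ a A) (substE τ a B)
  | prod A B => prod (substE τ a A) (substE τ a B)
  | all x κ A => all x κ (substE τ a A)
  | ex x κ A => ex x κ (substE τ a A)
  | impl t u A => impl (substE τ a t) (substE τ a u) (substE τ a A)
  | wth A t u => wth (substE τ a A) (substE τ a t) (substE τ a u)

/-- The free existential variables of a type. -/
def fev : Ty → List ℕ
  | unit => []
  | var _ => []
  | evar a => [a]
  | zero => []
  | succ t => fev t
  | arrow A B => fev A ++ fev B
  | sum A B => fev A ++ fev B
  | prod A B => fev A ++ fev B
  | all _ _ A => fev A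
  | ex _ _ A => fev A
  | impl t u A => fev t ++ fev u ++ fev A
  | wth A t u => fev A ++ fev t ++ fev u

end Ty

/-- Entries of an algorithmic context: universal variable declarations `α:κ`,
term variable declarations `x:A`, unsolved existentials `α̂:κ`, solved
existentials `α̂:κ = τ`, equations `α = τ`, and markers `►α̂`. -/
inductive CtxEntry : Type
  | uvar (α : ℕ) (κ : Srt)
  | tvar (x : ℕ) (A : Ty)
  | evar (a : ℕ) (κ : Srt)
  | solved (a : ℕ) (κ : Srt) (τ : Ty)
  | eqn (α : ℕ) (τ : Ty)
  | marker (a : ℕ)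
  deriving DecidableEq

/-- Algorithmic contexts, as lists whose head is the rightmost entry:
`Γ, e` is `e :: Γ` and `Γ₀, Γ₁` is `Γ₁ ++ Γ₀`. -/
abbrev ACtx := List CtxEntry

/-- Context application `[Γ]t`: substitute solutions of solved existential
variables and equated universal variables, iteratively. -/
def applyCtx : ACtx → Ty → Ty
  | [], t => t
  | CtxEntry.solved a _ τ :: Γ, t => applyCtx Γ (Ty.substE τ a t)
  | CtxEntry.eqn α τ :: Γ, t => applyCtx Γ (Ty.subst τ α t)
  | CtxEntry.uvar _ _ :: Γ, t => applyCtx Γ t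
  | CtxEntry.tvar _ _ :: Γ, t => applyCtx Γ t
  | CtxEntry.evar _ _ :: Γ, t => applyCtx Γ t
  | CtxEntry.marker _ :: Γ, t => applyCtx Γ t

/-- Algorithmic sorting judgment `Γ ⊢ t : κ`. -/
inductive ASort : ACtx → Ty → Srt → Prop
  | var {Γ α κ} : CtxEntry.uvar α κ ∈ Γ → ASort Γ (Ty.var α) κ
  | evar {Γ a κ} : CtxEntry.evar a κ ∈ Γ → ASort Γ (Ty.evar a) κ
  | solvedEvar {Γ a κ τ} : CtxEntry.solved a κ τ ∈ Γ → ASort Γ (Ty.evar a) κ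
  | unit {Γ} : ASort Γ Ty.unit Srt.star
  | zero {Γ} : ASort Γ Ty.zero Srt.nat
  | succ {Γ t} : ASort Γ t Srt.nat → ASort Γ (Ty.succ t) Srt.nat
  | arrow {Γ A B} : ASort Γ A Srt.star → ASort Γ B Srt.star →
      ASort Γ (Ty.arrow A B) Srt.star
  | sum {Γ A B} : ASort Γ A Srt.star → ASort Γ B Srt.star →
      ASort Γ (Ty.sum A B) Srt.star
  | prod {Γ A B} : ASort Γ A Srt.star → ASort Γ B Srt.star →
      ASort Γ (Ty.prod A B) Srt.star

/-- Well-formedness `Γ ⊢ t = u prop` of propositions (equations over sort ℕ). -/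
inductive APropWF : ACtx → Ty → Ty → Prop
  | eq {Γ t u} : ASort Γ t Srt.nat → ASort Γ u Srt.nat → APropWF Γ t u

/-- Algorithmic type well-formedness `Γ ⊢ A type`. -/
inductive ATyWF : ACtx → Ty → Prop
  | var {Γ α} : CtxEntry.uvar α Srt.star ∈ Γ → ATyWF Γ (Ty.var α)
  | evar {Γ a} : CtxEntry.evar a Srt.star ∈ Γ → ATyWF Γ (Ty.evar a)
  | solvedEvar {Γ a τ} : CtxEntry.solved a Srt.star τ ∈ Γ → ATyWF Γ (Ty.evar a)
  | unit {Γ} : ATyWF Γ Ty.unit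
  | arrow {Γ A B} : ATyWF Γ A → ATyWF Γ B → ATyWF Γ (Ty.arrow A B)
  | sum {Γ A B} : ATyWF Γ A → ATyWF Γ B → ATyWF Γ (Ty.sum A B)
  | prod {Γ A B} : ATyWF Γ A → ATyWF Γ B → ATyWF Γ (Ty.prod A B)
  | all {Γ x κ A} : ATyWF (CtxEntry.uvar x κ :: Γ) A → ATyWF Γ (Ty.all x κ A)
  | ex {Γ x κ A} : ATyWF (CtxEntry.uvar x κ :: Γ) A → ATyWF Γ (Ty.ex x κ A)
  | impl {Γ t u A} : APropWF Γ t u → ATyWF Γ A → ATyWF Γ (Ty.impl t u A)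
  | wth {Γ A t u} : ATyWF Γ A → APropWF Γ t u → ATyWF Γ (Ty.wth A t u)

/-- The variable(s) declared by a context entry (equations and markers
declare nothing). -/
def declOf : CtxEntry → Option ℕ
  | CtxEntry.uvar α _ => some α
  | CtxEntry.tvar x _ => some x
  | CtxEntry.evar a _ => some a
  | CtxEntry.solved a _ _ => some a
  | CtxEntry.eqn _ _ => none
  | CtxEntry.marker _ => none

/-- The names occurring in a context entry (for freshness). -/
def entryNames : CtxEntry → List ℕ
  | CtxEntry.uvar α _ => [α]
  | CtxEntry.tvar x _ => [x]
  | CtxEntry.evar a _ => [a]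
  | CtxEntry.solved a _ _ => [a]
  | CtxEntry.eqn _ _ => []
  | CtxEntry.marker a => [a]

/-- The domain of a context: all declared names. -/
def dom : ACtx → List ℕ
  | [] => []
  | e :: Γ => entryNames e ++ dom Γ

/-- Γ contains an equation for the universal variable α. -/
def hasEqn (Γ : ACtx) (α : ℕ) : Prop :=
  ∃ τ, CtxEntry.eqn α τ ∈ Γ

/-- Context well-formedness `⊢ Γ ctx`. -/
inductive CtxWF : ACtx → Prop
  | nil : CtxWF []
  | uvar {Γ α κ} : CtxWF Γ → α ∉ dom Γ → CtxWF (CtxEntry.uvar α κ :: Γ)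
  | tvar {Γ x A} : CtxWF Γ → x ∉ dom Γ → ATyWF Γ A → CtxWF (CtxEntry.tvar x A :: Γ)
  | evar {Γ a κ} : CtxWF Γ → a ∉ dom Γ → CtxWF (CtxEntry.evar a κ :: Γ)
  | solved {Γ a κ τ} : CtxWF Γ → a ∉ dom Γ → ASort Γ τ κ →
      CtxWF (CtxEntry.solved a κ τ :: Γ)
  | eqn {Γ α κ τ} : CtxWF Γ → CtxEntry.uvar α κ ∈ Γ → ¬ hasEqn Γ α →
      ASort Γ τ κ → CtxWF (CtxEntry.eqn α τ :: Γ)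
  | marker {Γ a} : CtxWF Γ → a ∉ dom Γ → CtxWF (CtxEntry.marker a :: Γ)

/-- Context extension `Γ ⟶ Δ`. -/
inductive CtxExt : ACtx → ACtx → Prop
  | nil : CtxExt [] []
  | tvar {Γ Δ x A A'} : CtxExt Γ Δ → applyCtx Δ A = applyCtx Δ A' →
      CtxExt (CtxEntry.tvar x A :: Γ) (CtxEntry.tvar x A' :: Δ)
  | uvar {Γ Δ α κ} : CtxExt Γ Δ → CtxExt (CtxEntry.uvar α κ :: Γ) (CtxEntry.uvar α κ :: Δ)
  | evar {Γ Δ a κ} : CtxExt Γ Δ → CtxExt (CtxEntry.evar a κ :: Γ) (CtxEntry.evar a κ :: Δ)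
  | solved {Γ Δ a κ t t'} : CtxExt Γ Δ → applyCtx Δ t = applyCtx Δ t' →
      CtxExt (CtxEntry.solved a κ t :: Γ) (CtxEntry.solved a κ t' :: Δ)
  | solve {Γ Δ a κ t} : CtxExt Γ Δ →
      CtxExt (CtxEntry.evar a κ :: Γ) (CtxEntry.solved a κ t :: Δ)
  | eqn {Γ Δ α t t'} : CtxExt Γ Δ → applyCtx Δ t = applyCtx Δ t' →
      CtxExt (CtxEntry.eqn α t :: Γ) (CtxEntry.eqn α t' :: Δ)
  | marker {Γ Δ a} : CtxExt Γ Δ → CtxExt (CtxEntry.marker a :: Γ) (CtxEntry.marker a :: Δ)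
  | add {Γ Δ a κ} : CtxExt Γ Δ → CtxExt Γ (CtxEntry.evar a κ :: Δ)
  | addSolved {Γ Δ a κ t} : CtxExt Γ Δ → CtxExt Γ (CtxEntry.solved a κ t :: Δ)

/-- `u` is declared in `Γ`. -/
def DeclaredIn (Γ : ACtx) (u : ℕ) : Prop :=
  ∃ e ∈ Γ, declOf e = some u

/-- `u` is declared (strictly) to the left of `v` in `Γ`
(recall the head of the list is the rightmost entry). -/
def DeclaredLeftOf (Γ : ACtx) (u v : ℕ) : Prop :=
  ∃ (Γ₃ Γ₂ Γ₁ : ACtx) (e₂ e₁ : CtxEntry),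
    Γ = Γ₃ ++ e₂ :: Γ₂ ++ e₁ :: Γ₁ ∧ declOf e₁ = some u ∧ declOf e₂ = some v

/-- A complete context: every existential variable is solved. -/
def Complete (Ω : ACtx) : Prop :=
  ∀ (a : ℕ) (κ : Srt), CtxEntry.evar a κ ∉ Ω

/-- A soft context: only (solved or unsolved) existential declarations. -/
def Soft (Θ : ACtx) : Prop :=
  ∀ e ∈ Θ, (∃ a κ, e = CtxEntry.evar a κ) ∨ (∃ a κ τ, e = CtxEntry.solved a κ τ)

/-- Entries of declarative contexts. -/
inductive DEntry : Type
  | uvar (α : ℕ) (κ : Srt)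
  | tvar (x : ℕ) (A : Ty)
  deriving DecidableEq

abbrev DCtx := List DEntry

/-- Substitution applied pointwise to a declarative context. -/
def substDCtx (τ : Ty) (α : ℕ) : DCtx → DCtx :=
  List.map fun e =>
    match e with
    | DEntry.uvar β κ => DEntry.uvar β κ
    | DEntry.tvar x A => DEntry.tvar x (Ty.subst τ α A)

/-- Context application `[Ω]Γ` of a (complete) context `Ω` to a context `Γ`
that it extends, producing a declarative context: solutions are substituted,
and existential declarations and markers are dropped. -/
def applyCtxCtx : ACtx → ACtx → DCtx
  | [], _ => []
  | CtxEntry.uvar α κ :: Ω, CtxEntry.uvar _ _ :: Γ =>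
      DEntry.uvar α κ :: applyCtxCtx Ω Γ
  | CtxEntry.tvar x A :: Ω, CtxEntry.tvar _ _ :: Γ =>
      DEntry.tvar x (applyCtx Ω A) :: applyCtxCtx Ω Γ
  | CtxEntry.eqn α τ :: Ω, CtxEntry.eqn _ _ :: Γ =>
      substDCtx (applyCtx Ω τ) α (applyCtxCtx Ω Γ)
  | CtxEntry.marker _ :: Ω, CtxEntry.marker _ :: Γ => applyCtxCtx Ω Γ
  | CtxEntry.solved _ _ _ :: Ω, CtxEntry.solved _ _ _ :: Γ => applyCtxCtx Ω Γ
  | CtxEntry.solved _ _ _ :: Ω, CtxEntry.evar _ _ :: Γ => applyCtxCtx Ω Γ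
  | CtxEntry.solved _ _ _ :: Ω, Γ => applyCtxCtx Ω Γ
  | CtxEntry.evar _ _ :: Ω, Γ => applyCtxCtx Ω Γ
  | _ :: Ω, Γ => applyCtxCtx Ω Γ

/-!
Each entry `α̂ = τ` or `α = τ` of a well-formed context is well-sorted by the entries to its left,
and every name is declared only once, so the sort of `τ` is the sort of the variable it replaces.
Hence each substitution step of `[Γ]t` preserves sorting in `Γ`. The induction runs over the
well-formedness of the part of `Γ` still to be applied, while sorting stays in the whole of `Γ`.
-/

lemma ASort.mono {Γ Δ : ACtx} {t : Ty} {κ : Srt} (hsub : Γ ⊆ Δ) (h : ASort Γ t κ) :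
    ASort Δ t κ := by
  induction h with
  | var hm => exact .var (hsub hm)
  | evar hm => exact .evar (hsub hm)
  | solvedEvar hm => exact .solvedEvar (hsub hm)
  | unit => exact .unit
  | zero => exact .zero
  | succ _ ih => exact .succ ih
  | arrow _ _ ih₁ ih₂ => exact .arrow ih₁ ih₂
  | sum _ _ ih₁ ih₂ => exact .sum ih₁ ih₂
  | prod _ _ ih₁ ih₂ => exact .prod ih₁ ih₂

lemma mem_dom_of_declOf_eq_some {Γ : ACtx} {e : CtxEntry} {a : ℕ} (he : e ∈ Γ)
    (hd : declOf e = some a) : a ∈ dom Γ := by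
  induction Γ with
  | nil => cases he
  | cons e' Γ ih =>
    rcases List.mem_cons.mp he with rfl | he
    · cases e <;> simp_all [declOf, entryNames, dom]
    · exact List.mem_append_right _ (ih he)

lemma CtxWF.of_cons {e : CtxEntry} {Γ : ACtx} (h : CtxWF (e :: Γ)) : CtxWF Γ := by
  cases h <;> assumption

lemma CtxWF.not_mem_dom_of_cons {e : CtxEntry} {Γ : ACtx} {a : ℕ} (h : CtxWF (e :: Γ))
    (hd : declOf e = some a) : a ∉ dom Γ := by
  cases h <;> simp only [declOf, Option.some.injEq, reduceCtorEq] at hd <;> subst hd <;> assumption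

lemma CtxWF.eq_of_declOf_eq {Γ : ACtx} (hΓ : CtxWF Γ) {e₁ e₂ : CtxEntry} {a : ℕ}
    (h₁ : e₁ ∈ Γ) (h₂ : e₂ ∈ Γ) (hd₁ : declOf e₁ = some a) (hd₂ : declOf e₂ = some a) :
    e₁ = e₂ := by
  induction Γ with
  | nil => cases h₁
  | cons e Γ ih =>
    rcases List.mem_cons.mp h₁ with rfl | h₁' <;> rcases List.mem_cons.mp h₂ with rfl | h₂'
    · rfl
    · exact absurd (mem_dom_of_declOf_eq_some h₂' hd₂) (hΓ.not_mem_dom_of_cons hd₁)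
    · exact absurd (mem_dom_of_declOf_eq_some h₁' hd₁) (hΓ.not_mem_dom_of_cons hd₂)
    · exact ih hΓ.of_cons h₁' h₂'

lemma ASort.substE {Δ : ACtx} {t τ : Ty} {κ κ' : Srt} {a : ℕ} (h : ASort Δ t κ)
    (hΔ : CtxWF Δ) (ha : CtxEntry.solved a κ' τ ∈ Δ) (hτ : ASort Δ τ κ') :
    ASort Δ (Ty.substE τ a t) κ := by
  induction h with
  | @evar b κ₀ hm =>
    by_cases hb : b = a
    · subst hb
      cases hΔ.eq_of_declOf_eq hm ha rfl rfl
    · simpa [Ty.substE, hb] using ASort.evar hm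
  | @solvedEvar b κ₀ τ₀ hm =>
    by_cases hb : b = a
    · subst hb
      cases hΔ.eq_of_declOf_eq hm ha rfl rfl
      simpa [Ty.substE] using hτ
    · simpa [Ty.substE, hb] using ASort.solvedEvar hm
  | var hm => exact .var hm
  | unit => exact .unit
  | zero => exact .zero
  | succ _ ih => exact .succ ih
  | arrow _ _ ih₁ ih₂ => exact .arrow ih₁ ih₂
  | sum _ _ ih₁ ih₂ => exact .sum ih₁ ih₂
  | prod _ _ ih₁ ih₂ => exact .prod ih₁ ih₂

lemma ASort.subst {Δ : ACtx} {t τ : Ty} {κ κ' : Srt} {α : ℕ} (h : ASort Δ t κ)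
    (hΔ : CtxWF Δ) (hα : CtxEntry.uvar α κ' ∈ Δ) (hτ : ASort Δ τ κ') :
    ASort Δ (Ty.subst τ α t) κ := by
  induction h with
  | @var x κ₀ hm =>
    by_cases hx : x = α
    · subst hx
      cases hΔ.eq_of_declOf_eq hm hα rfl rfl
      simpa [Ty.subst] using hτ
    · simpa [Ty.subst, hx] using ASort.var hm
  | evar hm => exact .evar hm
  | solvedEvar hm => exact .solvedEvar hm
  | unit => exact .unit
  | zero => exact .zero
  | succ _ ih => exact .succ ih
  | arrow _ _ ih₁ ih₂ => exact .arrow ih₁ ih₂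
  | sum _ _ ih₁ ih₂ => exact .sum ih₁ ih₂
  | prod _ _ ih₁ ih₂ => exact .prod ih₁ ih₂

lemma ASort.applyCtx_of_subset {Γ Δ : ACtx} (hΓ : CtxWF Γ) (hΔ : CtxWF Δ) (hsub : Γ ⊆ Δ)
    {t : Ty} {κ : Srt} (h : ASort Δ t κ) : ASort Δ (applyCtx Γ t) κ := by
  induction hΓ generalizing t with
  | nil => exact h
  | uvar _ _ ih | evar _ _ ih | marker _ _ ih | tvar _ _ _ ih =>
    exact ih (List.subset_of_cons_subset hsub) h
  | solved _ _ hτ ih =>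
    have hsub' := List.subset_of_cons_subset hsub
    exact ih hsub' (h.substE hΔ (hsub List.mem_cons_self) (hτ.mono hsub'))
  | eqn _ hα _ hτ ih =>
    have hsub' := List.subset_of_cons_subset hsub
    exact ih hsub' (h.subst hΔ (hsub' hα) (hτ.mono hsub'))

/-- **Right-hand substitution for sorting**: if `Γ ⊢ t : κ` (with `Γ` a
well-formed algorithmic context) then `Γ ⊢ [Γ]t : κ`. -/
theorem rhs_substitution_sorting (Γ : ACtx) (t : Ty) (κ : Srt)
    (hΓ : CtxWF Γ) (h : ASort Γ t κ) :
    ASort Γ (applyCtx Γ t) κ :=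
  h.applyCtx_of_subset hΓ hΓ (List.Subset.refl Γ)
end

section
/- Declaration order preservation: if Γ ⟶ Δ and variable u is declared to the left of variable v in Γ, then u is declared to the left of v in Δ. -/
/-! Extension keeps the declarations of `Γ` in order and only inserts new ones, so the
declared names of `Γ` form a sublist of those of `Δ`; and "`u` is declared to the left
of `v`" is exactly the sublist condition `[v, u] <+ declNames Γ`, which is transitive. -/

open scoped List

def declNames (Γ : ACtx) : List ℕ :=
  Γ.filterMap declOf

theorem CtxExt.declNames_sublist {Γ Δ : ACtx} (hext : CtxExt Γ Δ) :
    declNames Γ <+ declNames Δ := by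
  induction hext with
  | nil => exact List.Sublist.refl _
  | tvar _ _ ih | uvar _ ih | evar _ ih | solved _ _ ih | solve _ ih =>
    exact ih.cons_cons _
  | eqn _ _ ih | marker _ ih => exact ih
  | add _ ih | addSolved _ ih => exact ih.cons _

theorem declaredIn_iff_mem_declNames {Γ : ACtx} {u : ℕ} :
    DeclaredIn Γ u ↔ u ∈ declNames Γ := by
  simp [DeclaredIn, declNames]

theorem declaredLeftOf_cons {e : CtxEntry} {Γ : ACtx} {u v : ℕ} :
    DeclaredLeftOf (e :: Γ) u v ↔
      declOf e = some v ∧ DeclaredIn Γ u ∨ DeclaredLeftOf Γ u v := by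
  constructor
  · rintro ⟨_ | ⟨f, Γ₃⟩, Γ₂, Γ₁, e₂, e₁, hΓ, hu, hv⟩
    · obtain ⟨rfl, rfl⟩ := List.cons.inj hΓ
      exact Or.inl ⟨hv, e₁, by simp, hu⟩
    · obtain ⟨rfl, rfl⟩ := List.cons.inj hΓ
      exact Or.inr ⟨Γ₃, Γ₂, Γ₁, e₂, e₁, rfl, hu, hv⟩
  · rintro (⟨hv, e₁, he₁, hu⟩ | ⟨Γ₃, Γ₂, Γ₁, e₂, e₁, rfl, hu, hv⟩)
    · obtain ⟨Γ₂, Γ₁, rfl⟩ := List.append_of_mem he₁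
      exact ⟨[], Γ₂, Γ₁, e, e₁, rfl, hu, hv⟩
    · exact ⟨e :: Γ₃, Γ₂, Γ₁, e₂, e₁, rfl, hu, hv⟩

-- `[v, u]`, not `[u, v]`: the head of a context is its rightmost entry.
theorem declaredLeftOf_iff_sublist_declNames {Γ : ACtx} {u v : ℕ} :
    DeclaredLeftOf Γ u v ↔ [v, u] <+ declNames Γ := by
  induction Γ with
  | nil => simp [DeclaredLeftOf, declNames]
  | cons e Γ ih =>
    rw [declaredLeftOf_cons, ih, declaredIn_iff_mem_declNames]
    cases h : declOf e <;> simp [declNames, h, List.sublist_cons_iff, or_comm, eq_comm]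

/-- **Declaration order preservation**: if `Γ ⟶ Δ` and `u` is declared to the
left of `v` in `Γ`, then `u` is declared to the left of `v` in `Δ`. -/
theorem declaration_order_preservation (Γ Δ : ACtx) (u v : ℕ)
    (hext : CtxExt Γ Δ) (h : DeclaredLeftOf Γ u v) :
    DeclaredLeftOf Δ u v :=
  declaredLeftOf_iff_sublist_declNames.2 <|
    (declaredLeftOf_iff_sublist_declNames.1 h).trans hext.declNames_sublist
end

section
/- Deep existential variable introduction: (i) if Γ₀, Γ₁ is well-formed and α̂ is not declared in it, then Γ₀, Γ₁ ⟶ Γ₀, α̂:κ, Γ₁; (ii) if Γ₀, α̂:κ, Γ₁ is well-formed and Γ₀ ⊢ t : κ, then Γ₀, α̂:κ, Γ₁ ⟶ Γ₀, (α̂:κ = t), Γ₁; (iii) combining both, Γ₀, Γ₁ ⟶ Γ₀, (α̂:κ = t), Γ₁. -/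
theorem CtxExt.cons_cons {Γ Δ : ACtx} (e : CtxEntry) (h : CtxExt Γ Δ) :
    CtxExt (e :: Γ) (e :: Δ) := by
  cases e with
  | uvar => exact .uvar h
  | tvar => exact .tvar h rfl
  | evar => exact .evar h
  | solved => exact .solved h rfl
  | eqn => exact .eqn h rfl
  | marker => exact .marker h

theorem CtxExt.refl : ∀ Γ : ACtx, CtxExt Γ Γ
  | [] => .nil
  | e :: Γ => (CtxExt.refl Γ).cons_cons e

theorem CtxExt.append_left {Γ Δ : ACtx} (h : CtxExt Γ Δ) (Γ₁ : ACtx) :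
    CtxExt (Γ₁ ++ Γ) (Γ₁ ++ Δ) := by
  induction Γ₁ with
  | nil => exact h
  | cons e Γ₁ ih => exact ih.cons_cons e

/-- **Deep existential variable introduction**:
(i) a fresh unsolved existential may be inserted in the middle of a
well-formed context; (ii) an unsolved existential may be solved in place by a
term well-sorted under the prefix to its left; (iii) combining both, a fresh
solved existential may be inserted in the middle. -/
theorem deep_evar_introduction (Γ₀ Γ₁ : ACtx) (a : ℕ) (κ : Srt) (t : Ty) :
    (CtxWF (Γ₁ ++ Γ₀) → a ∉ dom (Γ₁ ++ Γ₀) →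
      CtxExt (Γ₁ ++ Γ₀) (Γ₁ ++ CtxEntry.evar a κ :: Γ₀)) ∧
    (CtxWF (Γ₁ ++ CtxEntry.evar a κ :: Γ₀) → ASort Γ₀ t κ →
      CtxExt (Γ₁ ++ CtxEntry.evar a κ :: Γ₀) (Γ₁ ++ CtxEntry.solved a κ t :: Γ₀)) ∧
    (CtxWF (Γ₁ ++ Γ₀) → a ∉ dom (Γ₁ ++ Γ₀) → ASort Γ₀ t κ →
      CtxExt (Γ₁ ++ Γ₀) (Γ₁ ++ CtxEntry.solved a κ t :: Γ₀)) :=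
  ⟨fun _ _ => (CtxExt.add (CtxExt.refl Γ₀)).append_left Γ₁,
   fun _ _ => (CtxExt.solve (CtxExt.refl Γ₀)).append_left Γ₁,
   fun _ _ _ => (CtxExt.addSolved (CtxExt.refl Γ₀)).append_left Γ₁⟩
end
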